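/- Pointwise submodularity does not suffice for the density-greedy guarantee: for every real r > 0 there exist a finite item set E, positive item costs c, a finite state set O, a nonempty set U of realizations, a goal value Q > 0, and a utility function of the form f(ψ) = Σ_{e ∈ dom(ψ)} v(e, ψ(e)) for nonnegative values v (so f is modular, hence the set function S ↦ Σ_{e∈S} v(e, φ(e)) is submodular for every φ ∈ U, and f is worst-case monotone and minimal dependent), such that every partial realization ψ consistent with some φ ∈ U with f(ψ) > 0 satisfies f(ψ) ≥ Q (i.e., the gap parameter η equals Q), and there are a worst-case density-greedy policy π^g covering Q and an adaptive policy π* covering Q with c_wc(π^g) > r · c_wc(π*). -/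

import Mathlib

namespace WCAS

variable {ι O : Type*}

/-- The domain of a partial realization `ψ : ι → Option O`. -/
def dom (ψ : ι → Option O) : Set ι := {e | ψ e ≠ none}

/-- A (full) realization `φ` is consistent with a partial realization `ψ`. -/
def consistent (φ : ι → O) (ψ : ι → Option O) : Prop :=
  ∀ e o, ψ e = some o → φ e = o

/-- `ψ` is a subrealization of `ψ'` (written `ψ ⊆ ψ'`). -/
def subreal (ψ ψ' : ι → Option O) : Prop :=
  ∀ e o, ψ e = some o → ψ' e = some o

/-- Extend a partial realization `ψ` by observing state `o` for item `e`. -/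
def extendPR [DecidableEq ι] (ψ : ι → Option O) (e : ι) (o : O) : ι → Option O :=
  fun x => if x = e then some o else ψ x

/-- The empty partial realization. -/
def emptyPR : ι → Option O := fun _ => none

/-- View a full realization as a partial realization with full domain. -/
def toPR (φ : ι → O) : ι → Option O := fun e => some (φ e)

/-- `O(e, ψ)`: the set of possible states of item `e` given observation `ψ`,
with respect to the set `U` of possible realizations. -/
def Ostates (U : Set (ι → O)) (e : ι) (ψ : ι → Option O) : Set O :=
  {o | ∃ φ ∈ U, consistent φ ψ ∧ φ e = o}

/-- The worst-case marginal utility `Δwc(e | ψ)` of item `e` on top of `ψ`. -/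
noncomputable def Dwc [DecidableEq ι] (f : (ι → Option O) → ℝ) (U : Set (ι → O))
    (e : ι) (ψ : ι → Option O) : ℝ :=
  sInf ((fun o => f (extendPR ψ e o) - f ψ) '' Ostates U e ψ)

/-- `f` is worst-case monotone. -/
def WCMonotone [DecidableEq ι] (f : (ι → Option O) → ℝ) (U : Set (ι → O)) : Prop :=
  ∀ ψ : ι → Option O, (∃ φ ∈ U, consistent φ ψ) →
    ∀ e, e ∉ dom ψ → 0 ≤ Dwc f U e ψ

/-- `f` is worst-case submodular. -/
def WCSubmodular [DecidableEq ι] (f : (ι → Option O) → ℝ) (U : Set (ι → O)) : Prop :=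
  ∀ ψ ψ' : ι → Option O, subreal ψ ψ' → (∃ φ ∈ U, consistent φ ψ') →
    ∀ e, e ∉ dom ψ' → Dwc f U e ψ' ≤ Dwc f U e ψ

/-- An adaptive policy maps each observation either to an item outside its
domain or to `none` (stop). -/
def ValidPolicy (π : (ι → Option O) → Option ι) : Prop :=
  ∀ ψ e, π ψ = some e → ψ e = none

/-- One step of executing policy `π` under realization `φ`. -/
def stepPolicy [DecidableEq ι] (π : (ι → Option O) → Option ι) (φ : ι → O)
    (ψ : ι → Option O) : ι → Option O :=
  match π ψ with
  | none => ψ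
  | some e => extendPR ψ e (φ e)

/-- Executing policy `π` under realization `φ` for `n` steps, starting from the
empty observation. -/
def runPolicy [DecidableEq ι] (π : (ι → Option O) → Option ι) (φ : ι → O) :
    ℕ → ι → Option O
  | 0 => emptyPR
  | n + 1 => stepPolicy π φ (runPolicy π φ n)

/-- The final partial realization `ψ(π, φ)` produced by executing `π` under `φ`
(a valid policy over a finite ground set terminates within `card ι` steps). -/
def finalPR [DecidableEq ι] [Fintype ι] (π : (ι → Option O) → Option ι) (φ : ι → O) :
    ι → Option O :=
  runPolicy π φ (Fintype.card ι)

open scoped Classical in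
/-- The total cost `c(dom ψ)` of the items in the domain of `ψ`. -/
noncomputable def costPR [Fintype ι] (c : ι → ℝ) (ψ : ι → Option O) : ℝ :=
  ∑ e : ι, if (ψ e).isSome then c e else 0

/-- The worst-case cost `c_wc(π) = max_{φ ∈ U} c(dom ψ(π, φ))`. -/
noncomputable def cwc [DecidableEq ι] [Fintype ι] (c : ι → ℝ) (U : Set (ι → O))
    (π : (ι → Option O) → Option ι) : ℝ :=
  sSup ((fun φ => costPR c (finalPR π φ)) '' U)

/-- The worst-case utility `f_wc(π) = min_{φ ∈ U} f(ψ(π, φ))`. -/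
noncomputable def fwc [DecidableEq ι] [Fintype ι] (f : (ι → Option O) → ℝ)
    (U : Set (ι → O)) (π : (ι → Option O) → Option ι) : ℝ :=
  sInf ((fun φ => f (finalPR π φ)) '' U)

/-- `ψ` is reachable by executing `π` under some realization in `U`. -/
def Reachable [DecidableEq ι] (π : (ι → Option O) → Option ι) (U : Set (ι → O))
    (ψ : ι → Option O) : Prop :=
  ∃ φ ∈ U, ∃ n, runPolicy π φ n = ψ

/-- Policy `π` covers the goal value `Q`: under every realization in `U`,
its final observation has utility at least `Q`. -/
def Covers [DecidableEq ι] [Fintype ι] (f : (ι → Option O) → ℝ) (U : Set (ι → O))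
    (π : (ι → Option O) → Option ι) (Q : ℝ) : Prop :=
  ∀ φ ∈ U, Q ≤ f (finalPR π φ)

/-- The worst-case density-greedy policy for the cover problem with goal `Q`:
it stops at observations with `f ψ ≥ Q`, and at any reachable observation with
`f ψ < Q` it selects an item maximizing `Δwc(e | ψ) / c(e)`. -/
def CoverGreedy [DecidableEq ι] [Fintype ι] (f : (ι → Option O) → ℝ)
    (U : Set (ι → O)) (c : ι → ℝ) (Q : ℝ) (π : (ι → Option O) → Option ι) : Prop :=
  ValidPolicy π ∧
  (∀ ψ : ι → Option O, Q ≤ f ψ → π ψ = none) ∧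
  (∀ ψ : ι → Option O, Reachable π U ψ → f ψ < Q →
    ∃ e, e ∉ dom ψ ∧ π ψ = some e ∧
      ∀ e', e' ∉ dom ψ → Dwc f U e' ψ / c e' ≤ Dwc f U e ψ / c e)

/-- The budgeted worst-case density-greedy policy: at any reachable observation
it picks a density-maximizing item and selects it if the budget permits,
stopping otherwise. -/
def BudgetGreedy [DecidableEq ι] [Fintype ι] (f : (ι → Option O) → ℝ)
    (U : Set (ι → O)) (c : ι → ℝ) (B : ℝ) (π : (ι → Option O) → Option ι) : Prop :=
  ValidPolicy π ∧
  ∀ ψ : ι → Option O, Reachable π U ψ → dom ψ ≠ Set.univ →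
    ∃ e, e ∉ dom ψ ∧
      (∀ e', e' ∉ dom ψ → Dwc f U e' ψ / c e' ≤ Dwc f U e ψ / c e) ∧
      ((costPR c ψ + c e ≤ B ∧ π ψ = some e) ∨ (B < costPR c ψ + c e ∧ π ψ = none))

/-- The relaxed budgeted worst-case density-greedy policy: it keeps selecting
density-maximizing items while the cost spent so far is within the budget
(thus also selecting the first item that makes the total cost exceed the
budget), and stops once the budget has been exceeded. -/
def RelaxedBudgetGreedy [DecidableEq ι] [Fintype ι] (f : (ι → Option O) → ℝ)
    (U : Set (ι → O)) (c : ι → ℝ) (B : ℝ) (π : (ι → Option O) → Option ι) : Prop :=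
  ValidPolicy π ∧
  (∀ ψ : ι → Option O, Reachable π U ψ → B < costPR c ψ → π ψ = none) ∧
  (∀ ψ : ι → Option O, Reachable π U ψ → costPR c ψ ≤ B → dom ψ ≠ Set.univ →
    ∃ e, e ∉ dom ψ ∧ π ψ = some e ∧
      ∀ e', e' ∉ dom ψ → Dwc f U e' ψ / c e' ≤ Dwc f U e ψ / c e)

/-! A "directory" item `d` of cost 1 reveals which of two items `x₀, x₁` of cost 1 holds unit
value; a further item `y` holds unit value in every realization but costs `a`. Before anything
is observed, `d` has no value and each `x_j` may turn out worthless, so the worst-case marginal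
of `d, x₀, x₁` is `0` while that of `y` is `1`: the worst-case greedy policy buys `y` at cost `a`,
whereas reading `d` and then the indicated `x_j` covers the goal at cost `2`. Taking
`a = 2r + 1` defeats any ratio `r`. All values lie in `{0, 1}`, so every observation of positive
utility has utility at least `Q = 1`. -/

section ModularUtility

variable {ι O : Type*}

theorem Ostates_emptyPR (U : Set (ι → O)) (e : ι) :
    Ostates U e emptyPR = (fun φ => φ e) '' U := by
  ext o
  simp [Ostates, consistent, emptyPR]

variable [Fintype ι]

def modularUtility (v : ι → O → ℝ) (ψ : ι → Option O) : ℝ :=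
  ∑ e, (ψ e).elim 0 (v e)

theorem sum_extendPR [DecidableEq ι] (g : ι → Option O → ℝ) {ψ : ι → Option O} {e : ι}
    (he : ψ e = none) (hg : g e none = 0) (o : O) :
    ∑ x, g x (extendPR ψ e o x) = ∑ x, g x (ψ x) + g e (some o) := by
  rw [← Finset.add_sum_erase _ _ (Finset.mem_univ e),
    ← Finset.add_sum_erase _ _ (Finset.mem_univ e), he, hg, zero_add, add_comm]
  congr 1
  · exact Finset.sum_congr rfl fun x hx => by simp [extendPR, Finset.ne_of_mem_erase hx]
  · simp [extendPR]

variable (v : ι → O → ℝ)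

@[simp]
theorem modularUtility_emptyPR : modularUtility v emptyPR = 0 := by
  simp [modularUtility, emptyPR]

theorem modularUtility_extendPR [DecidableEq ι] {ψ : ι → Option O} {e : ι} (he : ψ e = none)
    (o : O) : modularUtility v (extendPR ψ e o) = modularUtility v ψ + v e o :=
  sum_extendPR (fun x p => p.elim 0 (v x)) he rfl o

theorem le_modularUtility_of_pos {Q : ℝ} (hQ : 0 ≤ Q) (hv : ∀ e o, v e o = 0 ∨ Q ≤ v e o)
    {ψ : ι → Option O} (hpos : 0 < modularUtility v ψ) : Q ≤ modularUtility v ψ := by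
  have hterm : ∀ e, (ψ e).elim 0 (v e) = 0 ∨ Q ≤ (ψ e).elim 0 (v e) := fun e => by
    cases ψ e with
    | none => exact Or.inl rfl
    | some o => exact hv e o
  have hnonneg : ∀ e, 0 ≤ (ψ e).elim 0 (v e) := fun e => by
    rcases hterm e with h | h <;> linarith
  obtain ⟨e, -, he⟩ := Finset.exists_lt_of_sum_lt (s := Finset.univ) (f := fun _ => (0 : ℝ))
    (by simpa [modularUtility] using hpos)
  calc Q ≤ (ψ e).elim 0 (v e) := (hterm e).resolve_left he.ne'
    _ ≤ modularUtility v ψ :=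
      Finset.single_le_sum (fun x _ => hnonneg x) (Finset.mem_univ e)

theorem Dwc_modularUtility_emptyPR [DecidableEq ι] (U : Set (ι → O)) (e : ι) :
    Dwc (modularUtility v) U e emptyPR = sInf ((fun φ => v e (φ e)) '' U) := by
  have hmarg : ∀ o, modularUtility v (extendPR emptyPR e o) - modularUtility v emptyPR = v e o :=
    fun o => by simp [modularUtility_extendPR v (show (emptyPR : ι → Option O) e = none from rfl)]
  simp only [Dwc, hmarg, Ostates_emptyPR, Set.image_image]

end ModularUtility

section Cost

variable {ι O : Type*} [Fintype ι] (c : ι → ℝ)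

@[simp]
theorem costPR_emptyPR : costPR c (emptyPR : ι → Option O) = 0 := by
  simp [costPR, emptyPR]

theorem costPR_extendPR [DecidableEq ι] {ψ : ι → Option O} {e : ι} (he : ψ e = none) (o : O) :
    costPR c (extendPR ψ e o) = costPR c ψ + c e := by
  unfold costPR
  exact sum_extendPR (fun x p => if p.isSome then c x else 0) he rfl o

theorem cwc_eq_of_forall_costPR_eq [DecidableEq ι] {U : Set (ι → O)} (hU : U.Nonempty)
    {π : (ι → Option O) → Option ι} {x : ℝ} (h : ∀ φ ∈ U, costPR c (finalPR π φ) = x) :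
    cwc c U π = x := by
  rw [cwc, Set.image_congr h, hU.image_const, csSup_singleton]

end Cost

section Execution

variable {ι O : Type*} [DecidableEq ι] {π : (ι → Option O) → Option ι} {φ : ι → O}
  {ψ : ι → Option O} {n : ℕ}

theorem runPolicy_succ_of_eq_some (h : runPolicy π φ n = ψ) {e : ι} (hπ : π ψ = some e) :
    runPolicy π φ (n + 1) = extendPR ψ e (φ e) := by
  simp only [runPolicy, stepPolicy, h, hπ]

theorem runPolicy_add_of_eq_none (h : runPolicy π φ n = ψ) (hπ : π ψ = none) (k : ℕ) :
    runPolicy π φ (n + k) = ψ := by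
  induction k with
  | zero => exact h
  | succ k ih =>
    show stepPolicy π φ (runPolicy π φ (n + k)) = ψ
    rw [ih, stepPolicy, hπ]

theorem finalPR_eq_of_eq_none [Fintype ι] (h : runPolicy π φ n = ψ) (hπ : π ψ = none)
    (hn : n ≤ Fintype.card ι) : finalPR π φ = ψ := by
  rw [finalPR, ← Nat.add_sub_cancel' hn]
  exact runPolicy_add_of_eq_none h hπ _

end Execution

namespace ModularCounterexample

/- Items: `0` is the directory `d`, `1` and `2` are `x₀` and `x₁`, `3` is `y`. Under
realization `j`, `d` shows `j`, `x_j` is in state `1`, the other `x` in state `0`, and `y` in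
state `0`. -/
def realization (j : Fin 2) : Fin 4 → Fin 2 := ![j, 1 - j, j, 0]

def realizations : Set (Fin 4 → Fin 2) := {realization 0, realization 1}

def value (e : Fin 4) (o : Fin 2) : ℝ := if e = 3 ∨ (e ≠ 0 ∧ o = 1) then 1 else 0

def cost (a : ℝ) (e : Fin 4) : ℝ := if e = 3 then a else 1

def xItem (j : Fin 2) : Fin 4 := if j = 0 then 1 else 2

noncomputable def greedyPolicy (ψ : Fin 4 → Option (Fin 2)) : Option (Fin 4) :=
  if 1 ≤ modularUtility value ψ then none else if ψ 3 = none then some 3 else none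

def directoryPolicy (ψ : Fin 4 → Option (Fin 2)) : Option (Fin 4) :=
  match ψ 0 with
  | none => some 0
  | some j => if ψ (xItem j) = none then some (xItem j) else none

theorem realizations_nonempty : realizations.Nonempty := ⟨realization 0, Or.inl rfl⟩

theorem value_eq_zero_or_one_le (e : Fin 4) (o : Fin 2) : value e o = 0 ∨ 1 ≤ value e o := by
  unfold value
  split_ifs <;> norm_num

theorem value_nonneg (e : Fin 4) (o : Fin 2) : 0 ≤ value e o := by
  rcases value_eq_zero_or_one_le e o with h | h <;> linarith

theorem cost_pos {a : ℝ} (ha : 0 < a) (e : Fin 4) : 0 < cost a e := by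
  unfold cost
  split_ifs <;> linarith

theorem Dwc_emptyPR (e : Fin 4) :
    Dwc (modularUtility value) realizations e emptyPR = if e = 3 then 1 else 0 := by
  rw [Dwc_modularUtility_emptyPR, realizations, Set.image_pair, csInf_pair]
  fin_cases e <;> simp [value, realization]

section Greedy

def afterY : Fin 4 → Option (Fin 2) := extendPR emptyPR 3 0

theorem modularUtility_afterY : modularUtility value afterY = 1 := by
  simp [afterY, modularUtility_extendPR value (rfl : (emptyPR : Fin 4 → Option (Fin 2)) 3 = none),
    value]

theorem greedyPolicy_emptyPR : greedyPolicy emptyPR = some 3 := by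
  simp [greedyPolicy, emptyPR]

theorem greedyPolicy_afterY : greedyPolicy afterY = none := by
  simp [greedyPolicy, modularUtility_afterY]

theorem runPolicy_greedyPolicy_one {φ : Fin 4 → Fin 2} (hφ : φ ∈ realizations) :
    runPolicy greedyPolicy φ 1 = afterY := by
  rw [runPolicy_succ_of_eq_some rfl greedyPolicy_emptyPR]
  rcases hφ with rfl | rfl <;> rfl

theorem finalPR_greedyPolicy {φ : Fin 4 → Fin 2} (hφ : φ ∈ realizations) :
    finalPR greedyPolicy φ = afterY :=
  finalPR_eq_of_eq_none (runPolicy_greedyPolicy_one hφ) greedyPolicy_afterY (by simp)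

theorem covers_greedyPolicy : Covers (modularUtility value) realizations greedyPolicy 1 :=
  fun φ hφ => by rw [finalPR_greedyPolicy hφ, modularUtility_afterY]

theorem reachable_greedyPolicy {ψ : Fin 4 → Option (Fin 2)}
    (h : Reachable greedyPolicy realizations ψ) : ψ = emptyPR ∨ ψ = afterY := by
  obtain ⟨φ, hφ, n, rfl⟩ := h
  cases n with
  | zero => exact Or.inl rfl
  | succ n =>
    rw [add_comm]
    exact Or.inr (runPolicy_add_of_eq_none (runPolicy_greedyPolicy_one hφ) greedyPolicy_afterY n)

theorem coverGreedy_greedyPolicy {a : ℝ} (ha : 0 < a) :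
    CoverGreedy (modularUtility value) realizations (cost a) 1 greedyPolicy := by
  refine ⟨fun ψ e h => ?_, fun ψ hψ => by simp [greedyPolicy, hψ], fun ψ hψ hlt => ?_⟩
  · unfold greedyPolicy at h
    split_ifs at h with _ h3
    cases h
    exact h3
  rcases reachable_greedyPolicy hψ with rfl | rfl
  · refine ⟨3, by simp [dom, emptyPR], greedyPolicy_emptyPR, fun e' _ => ?_⟩
    simp only [Dwc_emptyPR, if_true]
    split_ifs with he'
    · rw [he']
    · simp only [zero_div, cost, if_true]
      positivity
  · exact absurd hlt (by simp [modularUtility_afterY])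

theorem cwc_greedyPolicy (a : ℝ) : cwc (cost a) realizations greedyPolicy = a :=
  cwc_eq_of_forall_costPR_eq _ realizations_nonempty fun φ hφ => by
    simp [finalPR_greedyPolicy hφ, afterY,
      costPR_extendPR _ (rfl : (emptyPR : Fin 4 → Option (Fin 2)) 3 = none), cost]

end Greedy

section Directory

def afterDirectory (j : Fin 2) : Fin 4 → Option (Fin 2) :=
  extendPR (extendPR emptyPR 0 j) (xItem j) 1

theorem extendPR_emptyPR_zero_xItem (j : Fin 2) : extendPR emptyPR 0 j (xItem j) = none := by
  fin_cases j <;> rfl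

theorem modularUtility_afterDirectory (j : Fin 2) :
    modularUtility value (afterDirectory j) = 1 := by
  rw [afterDirectory, modularUtility_extendPR value (extendPR_emptyPR_zero_xItem j),
    modularUtility_extendPR value rfl]
  fin_cases j <;> simp [value, xItem]

theorem costPR_afterDirectory (a : ℝ) (j : Fin 2) : costPR (cost a) (afterDirectory j) = 2 := by
  rw [afterDirectory, costPR_extendPR _ (extendPR_emptyPR_zero_xItem j), costPR_extendPR _ rfl]
  fin_cases j <;> simp [cost, xItem] <;> norm_num

theorem validPolicy_directoryPolicy : ValidPolicy directoryPolicy := by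
  intro ψ e h
  unfold directoryPolicy at h
  split at h
  · cases h
    assumption
  · split_ifs at h with hx
    cases h
    exact hx

theorem finalPR_directoryPolicy (j : Fin 2) :
    finalPR directoryPolicy (realization j) = afterDirectory j :=
  finalPR_eq_of_eq_none (n := 2) (by fin_cases j <;> rfl) (by fin_cases j <;> rfl) (by simp)

theorem finalPR_directoryPolicy_of_mem {φ : Fin 4 → Fin 2} (hφ : φ ∈ realizations) :
    ∃ j, finalPR directoryPolicy φ = afterDirectory j := by
  rcases hφ with rfl | rfl
  exacts [⟨0, finalPR_directoryPolicy 0⟩, ⟨1, finalPR_directoryPolicy 1⟩]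

theorem covers_directoryPolicy :
    Covers (modularUtility value) realizations directoryPolicy 1 := fun φ hφ => by
  obtain ⟨j, hj⟩ := finalPR_directoryPolicy_of_mem hφ
  rw [hj, modularUtility_afterDirectory]

theorem cwc_directoryPolicy (a : ℝ) : cwc (cost a) realizations directoryPolicy = 2 :=
  cwc_eq_of_forall_costPR_eq _ realizations_nonempty fun φ hφ => by
    obtain ⟨j, hj⟩ := finalPR_directoryPolicy_of_mem hφ
    rw [hj, costPR_afterDirectory]

end Directory

end ModularCounterexample

open ModularCounterexample in
/-- **Pointwise submodularity is not sufficient.** For every `r > 0` there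
exist a finite item set `Fin n`, positive costs `c`, a finite state set
`Fin nO`, a nonempty set `U` of realizations, a goal value `Q > 0`, and
nonnegative values `v` defining the modular (hence pointwise submodular)
utility `f ψ = ∑_{e ∈ dom ψ} v e (ψ e)`, such that every partial realization
consistent with some realization in `U` with positive utility already has
utility at least `Q` (so the gap parameter `η` equals `Q`), yet there are a
worst-case density-greedy policy `π^g` covering `Q` and an adaptive policy
`π*` covering `Q` with `c_wc(π^g) > r · c_wc(π*)`. -/
theorem stmt_15 :
    ∀ r : ℝ, 0 < r →
      ∃ (n nO : ℕ), 0 < n ∧ 0 < nO ∧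
      ∃ (c : Fin n → ℝ), (∀ e, 0 < c e) ∧
      ∃ (U : Set (Fin n → Fin nO)), U.Nonempty ∧
      ∃ (Q : ℝ), 0 < Q ∧
      ∃ (v : Fin n → Fin nO → ℝ), (∀ e o, 0 ≤ v e o) ∧
      (∀ ψ : Fin n → Option (Fin nO), (∃ φ ∈ U, consistent φ ψ) →
        0 < (∑ e, (ψ e).elim 0 (v e)) → Q ≤ ∑ e, (ψ e).elim 0 (v e)) ∧
      ∃ πg : (Fin n → Option (Fin nO)) → Option (Fin n),
        CoverGreedy (fun ψ => ∑ e, (ψ e).elim 0 (v e)) U c Q πg ∧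
        Covers (fun ψ => ∑ e, (ψ e).elim 0 (v e)) U πg Q ∧
      ∃ πs : (Fin n → Option (Fin nO)) → Option (Fin n),
        ValidPolicy πs ∧
        Covers (fun ψ => ∑ e, (ψ e).elim 0 (v e)) U πs Q ∧
        r * cwc c U πs < cwc c U πg := by
  intro r hr
  have ha : 0 < 2 * r + 1 := by linarith
  refine ⟨4, 2, by norm_num, by norm_num, cost (2 * r + 1), cost_pos ha, realizations,
    realizations_nonempty, 1, one_pos, value, value_nonneg,
    fun ψ _ hpos => le_modularUtility_of_pos value zero_le_one value_eq_zero_or_one_le hpos,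
    greedyPolicy, coverGreedy_greedyPolicy ha, covers_greedyPolicy,
    directoryPolicy, validPolicy_directoryPolicy, covers_directoryPolicy, ?_⟩
  rw [cwc_greedyPolicy, cwc_directoryPolicy]
  linarith

end WCAS
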